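/- arXiv:1507.03161 — 2 statements merged into one kernel-verified Lean document; each statement's English description precedes it below -/
import Mathlib

section
/- The ℤ/2-vector space X_{m+1} has dimension β_n. -/
open CategoryTheory AlgebraicTopology Finset

noncomputable section

/-- The singular chain complex functor with coefficients in a commutative ring `R`:
the free `R`-module functor applied levelwise to the singular simplicial set, followed by
the alternating face map complex. -/
def singularChainComplex (R : Type) [CommRing R] : TopCat ⥤ ChainComplex (ModuleCat R) ℕ :=
  TopCat.toSSet ⋙ ((SimplicialObject.whiskering _ _).obj (ModuleCat.free R)) ⋙
    alternatingFaceMapComplex _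

/-- Singular homology with coefficients in `R`, as a functor `TopCat ⥤ ModuleCat R`. -/
def SH (R : Type) [CommRing R] (q : ℕ) : TopCat ⥤ ModuleCat R :=
  singularChainComplex R ⋙ HomologicalComplex.homologyFunctor _ _ q

/-- View a morphism of `ModuleCat R` as a linear map. -/
def homToLinear {R : Type} [CommRing R] {M N : ModuleCat R} (f : M ⟶ N) : M →ₗ[R] N where
  toFun := f.hom
  map_add' := map_add f.hom
  map_smul' := map_smul f.hom

/-- `D_n = C(n-1, m-1)` for `n = 2m+1`. -/
def Dnum (m : ℕ) : ℕ := (2*m).choose (m-1)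

/-- `α_n = ∑_{i=0}^{m-1} 2^{m-1-i} C(2i, i)` for `n = 2m+1`. -/
def alphaNum (m : ℕ) : ℕ := ∑ i ∈ Finset.range m, 2^(m-1-i) * (2*i).choose i

/-- `β_n = D_n - α_n`. -/
def betaNum (m : ℕ) : ℕ := Dnum m - alphaNum m

/-- The polynomial ring `(ℤ/2)[R, V_1, …, V_{n-1}]` for `n = 2m+1`; the variable `none`
is `R` and the variable `some i` is `V_{i+1}`. -/
abbrev PolyRing (m : ℕ) := MvPolynomial (Option (Fin (2*m))) (ZMod 2)

/-- The relations (R1): `V_i² + R·V_i`. -/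
def rel1 (m : ℕ) : Set (PolyRing m) :=
  Set.range fun i : Fin (2*m) =>
    (MvPolynomial.X (some i))^2 + MvPolynomial.X none * MvPolynomial.X (some i)

/-- The relations (R2): `∏_{i∈S} V_i` for `|S| ≥ m`. -/
def rel2 (m : ℕ) : Set (PolyRing m) :=
  {p | ∃ S : Finset (Fin (2*m)), m ≤ S.card ∧ p = ∏ i ∈ S, MvPolynomial.X (some i)}

/-- The relations (R3): `∑_{S⊆L} R^{|L∖S|-1} ∏_{i∈S} V_i` for `|L| ≥ m+1`. -/
def rel3 (m : ℕ) : Set (PolyRing m) :=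
  {p | ∃ L : Finset (Fin (2*m)), m+1 ≤ L.card ∧
    p = ∑ S ∈ L.powerset,
      (MvPolynomial.X none)^(L.card - S.card - 1) * ∏ i ∈ S, MvPolynomial.X (some i)}

/-- The ideal `𝓘_n` generated by the relations (R1), (R2), (R3). -/
def idealI (m : ℕ) : Ideal (PolyRing m) := Ideal.span (rel1 m ∪ rel2 m ∪ rel3 m)

/-- The ring `Λ_n = (ℤ/2)[R, V_1, …, V_{n-1}]/𝓘_n`
(isomorphic to `H^*(M_n/τ; ℤ/2)` by Hausmann–Knutson). -/
abbrev LambdaRing (m : ℕ) := PolyRing m ⧸ idealI m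

/-- The degree-`q` homogeneous component `Λ_n^q` of `Λ_n`, i.e. the image in the quotient of
the homogeneous polynomials of degree `q`. -/
def LambdaComp (m q : ℕ) : Submodule (ZMod 2) (LambdaRing m) :=
  (MvPolynomial.homogeneousSubmodule (Option (Fin (2*m))) (ZMod 2) q).map
    (Ideal.Quotient.mkₐ (ZMod 2) (idealI m)).toLinearMap

/-- Multiplication by `R²` on `Λ_n`, as a `ℤ/2`-linear map. -/
def mulR2 (m : ℕ) : LambdaRing m →ₗ[ZMod 2] LambdaRing m :=
  LinearMap.mulLeft (ZMod 2)
    ((Ideal.Quotient.mkₐ (ZMod 2) (idealI m)) ((MvPolynomial.X none)^2))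

/-- The linear map `(ι → ℤ/2) →ₗ M` sending `ξ` to `∑ i, ξ i • v i`. -/
def lcomb {ι : Type} [Fintype ι] {M : Type} [AddCommMonoid M] [Module (ZMod 2) M]
    (v : ι → M) : (ι → ZMod 2) →ₗ[ZMod 2] M where
  toFun ξ := ∑ i, ξ i • v i
  map_add' ξ η := by simp [add_smul, Finset.sum_add_distrib]
  map_smul' c ξ := by simp [Finset.smul_sum, smul_smul]

/-- `p_L = ∑_S R·∏_{j∈S} V_j`, summed over the `(m-1)`-element subsets `S` of `L`. -/
def pPoly (m : ℕ) (L : Finset (Fin (2*m))) : PolyRing m :=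
  ∑ S ∈ L.powerset.filter (fun S => S.card = m - 1),
    MvPolynomial.X none * ∏ j ∈ S, MvPolynomial.X (some j)

/-- `f_L = ∑_S R^{|L∖S|-1}·∏_{j∈S} V_j`, summed over the subsets `S` of `L`
with `|S| ≤ m-2`. -/
def fPoly (m : ℕ) (L : Finset (Fin (2*m))) : PolyRing m :=
  ∑ S ∈ L.powerset.filter (fun S => S.card ≤ m - 2),
    (MvPolynomial.X none)^(L.card - S.card - 1) * ∏ j ∈ S, MvPolynomial.X (some j)


/-!
The coefficient of `R·V_S` in `∑_L ξ_L p_L` is `∑_{L ⊇ S} ξ_L`, so `X_{m+1}` is the kernel of the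
mod-2 inclusion matrix `W_k` of `k`-subsets versus `(k+2)`-subsets of a `2m`-set, at `k = m - 1`.
These matrices form a complex (`W_k W_{k+2} = 0` because `C(4,2)` is even), and whenever `m + k`
is odd, `W_{k+2} W_{k+2}ᵀ + W_kᵀ W_k = 1`: the entry at `(S, T)` counts the common supersets and
the common subsets of `S` and `T`. Hence the complex is exact at the levels `m + 1 + 2j`, and
`dim X_{m+1} = ∑_j (-1)^j C(2m, m+3+2j)`. Pascal's rule applied twice turns the recursion
`α_{m+1} = 2 α_m + C(2m, m)` into `α_m = ∑_j (-1)^j C(2m, m+1+2j)`, and the two alternating sums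
add up to `C(2m, m+1) = D_n`.
-/

open Matrix MvPolynomial

lemma choose_two_mod_two (n : ℕ) : n.choose 2 % 2 = n / 2 % 2 := by
  induction n with
  | zero => rfl
  | succ n ih =>
    rw [show (n + 1).choose 2 = n.choose 1 + n.choose 2 from Nat.choose_succ_succ' n 1,
      Nat.choose_one_right]
    obtain ⟨t, rfl | rfl⟩ := Nat.even_or_odd' n <;> omega

lemma odd_choose_two_add_choose_two {m j : ℕ} (hj : j ≤ 2 * m) (h : Odd (m + j)) :
    Odd ((2 * m - j).choose 2 + j.choose 2) := by
  have h₁ := choose_two_mod_two (2 * m - j)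
  have h₂ := choose_two_mod_two j
  rw [Nat.odd_iff] at h ⊢
  obtain ⟨t, rfl | rfl⟩ := Nat.even_or_odd' j <;> omega

lemma choose_add_two_add_two (n r : ℕ) :
    (n + 2).choose (r + 2) = n.choose r + 2 * n.choose (r + 1) + n.choose (r + 2) := by
  simp only [Nat.choose_succ_succ']
  ring

/-- `∑_{j ≥ 0} (-1)^j C(n, r + 2j)`; the range `n + 1` already contains every nonzero term. -/
def altChooseTail (n r : ℕ) : ℤ :=
  ∑ j ∈ range (n + 1), (-1) ^ j * (n.choose (r + 2 * j) : ℤ)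

lemma altChooseTail_eq_sum_range {n N : ℕ} (r : ℕ) (hN : n + 1 ≤ N) :
    altChooseTail n r = ∑ j ∈ range N, (-1) ^ j * (n.choose (r + 2 * j) : ℤ) := by
  refine sum_subset (range_subset_range.2 hN) fun j _ hj => ?_
  rw [Nat.choose_eq_zero_of_lt (by simp at hj; omega), Nat.cast_zero, mul_zero]

lemma altChooseTail_eq_zero {n r : ℕ} (h : n < r) : altChooseTail n r = 0 :=
  sum_eq_zero fun j _ => by rw [Nat.choose_eq_zero_of_lt (by omega), Nat.cast_zero, mul_zero]

lemma altChooseTail_add_altChooseTail (n r : ℕ) :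
    altChooseTail n r + altChooseTail n (r + 2) = n.choose r := by
  rw [altChooseTail_eq_sum_range r (N := n + 2) (by omega), sum_range_succ', altChooseTail]
  have (j : ℕ) : (-1 : ℤ) ^ (j + 1) * (n.choose (r + 2 * (j + 1)) : ℤ)
      = -((-1) ^ j * (n.choose (r + 2 + 2 * j) : ℤ)) := by
    rw [show r + 2 * (j + 1) = r + 2 + 2 * j by ring, pow_succ]
    ring
  simp only [this, sum_neg_distrib, pow_zero, mul_zero, add_zero, one_mul]
  abel

lemma altChooseTail_add_two_add_two (n r : ℕ) :
    altChooseTail (n + 2) (r + 2)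
      = altChooseTail n r + 2 * altChooseTail n (r + 1) + altChooseTail n (r + 2) := by
  rw [altChooseTail, altChooseTail_eq_sum_range r (N := n + 3) (by omega),
    altChooseTail_eq_sum_range (r + 1) (N := n + 3) (by omega),
    altChooseTail_eq_sum_range (r + 2) (N := n + 3) (by omega), mul_sum, ← sum_add_distrib,
    ← sum_add_distrib]
  refine sum_congr rfl fun j _ => ?_
  rw [show r + 2 + 2 * j = r + 2 * j + 2 by ring, choose_add_two_add_two]
  push_cast
  ring_nf

lemma alphaNum_succ (m : ℕ) : alphaNum (m + 1) = 2 * alphaNum m + (2 * m).choose m := by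
  rw [alphaNum, sum_range_succ, alphaNum, mul_sum, Nat.add_sub_cancel, Nat.sub_self, pow_zero,
    one_mul]
  congr 1
  refine sum_congr rfl fun i hi => ?_
  rw [mem_range] at hi
  rw [show m - i = m - 1 - i + 1 by omega, pow_succ]
  ring

lemma alphaNum_eq_altChooseTail (m : ℕ) : (alphaNum m : ℤ) = altChooseTail (2 * m) (m + 1) := by
  induction m with
  | zero => simp [alphaNum, altChooseTail]
  | succ m ih =>
    have hT := altChooseTail_add_altChooseTail (2 * m) m
    rw [alphaNum_succ, show 2 * (m + 1) = 2 * m + 2 by ring, altChooseTail_add_two_add_two]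
    push_cast
    linear_combination 2 * ih - hT

lemma alphaNum_add_altChooseTail (k : ℕ) :
    (alphaNum (k + 1) : ℤ) + altChooseTail (2 * (k + 1)) (k + 4) = Dnum (k + 1) := by
  rw [alphaNum_eq_altChooseTail, Dnum, Nat.add_sub_cancel,
    Nat.choose_symm_of_eq_add (show 2 * (k + 1) = k + (k + 2) by ring)]
  exact altChooseTail_add_altChooseTail _ _

lemma LinearMap.ker_eq_range_of_homotopy {R M N P : Type*} [Semiring R] [AddCommMonoid M]
    [AddCommMonoid N] [AddCommMonoid P] [Module R M] [Module R N] [Module R P]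
    {d : N →ₗ[R] P} {d' : M →ₗ[R] N} (h : N →ₗ[R] M) (h' : P →ₗ[R] N) (hdd : d ∘ₗ d' = 0)
    (hid : d' ∘ₗ h + h' ∘ₗ d = LinearMap.id) : LinearMap.ker d = LinearMap.range d' := by
  refine le_antisymm (fun x hx => ⟨h x, ?_⟩) (LinearMap.range_le_ker_iff.2 hdd)
  simpa [LinearMap.mem_ker.1 hx] using LinearMap.congr_fun hid x

lemma MvPolynomial.linearIndependent_prod_X (σ R : Type*) [CommSemiring R] [DecidableEq σ] :
    LinearIndependent R fun s : Finset σ => ∏ i ∈ s, (X i : MvPolynomial σ R) := by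
  have h : (fun s : Finset σ => ∏ i ∈ s, (X i : MvPolynomial σ R))
      = basisMonomials σ R ∘ fun s => Multiset.toFinsupp s.val := by
    funext s
    rw [coe_basisMonomials, Function.comp_apply, ← prod_X_pow_eq_monomial,
      Multiset.toFinsupp_support, val_toFinset]
    refine prod_congr rfl fun i hi => ?_
    rw [Multiset.toFinsupp_apply, Multiset.count_eq_one_of_mem s.nodup hi, pow_one]
  rw [h]
  exact (basisMonomials σ R).linearIndependent.comp _
    (Multiset.toFinsupp.injective.comp val_injective)

def inclusionMatrix (α : Type*) [DecidableEq α] (R : Type*) [Zero R] [One R] (i j : ℕ) :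
    Matrix {s : Finset α // #s = i} {t : Finset α // #t = j} R :=
  Matrix.of fun s t => if s.1 ⊆ t.1 then 1 else 0

section InclusionMatrix

variable {α : Type*} [Fintype α] {R : Type*} [Semiring R]

lemma sum_boole_subtype_card_eq (j : ℕ) (p : Finset α → Prop) [DecidablePred p] :
    (∑ t : {t : Finset α // #t = j}, if p t.1 then (1 : R) else 0)
      = #((powersetCard j univ).filter p) := by
  rw [← sum_subtype (powersetCard j univ) (by simp) fun t => if p t then (1 : R) else 0,
    sum_boole]

variable [DecidableEq α]

lemma card_filter_powersetCard_univ_superset (s : Finset α) (j : ℕ) :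
    #((powersetCard j univ).filter (s ⊆ ·))
      = if #s ≤ j then (Fintype.card α - #s).choose (j - #s) else 0 := by
  split_ifs with h
  · rw [card_filter_powersetCard_subset s univ j (subset_univ s) h, card_univ]
  · refine card_eq_zero.2 (filter_eq_empty_iff.2 fun t ht hst => h ?_)
    exact (card_le_card hst).trans (mem_powersetCard.1 ht).2.le

lemma inclusionMatrix_mul_inclusionMatrix_apply {i j : ℕ} (l : ℕ) (hij : i ≤ j)
    (s : {s : Finset α // #s = i}) (u : {u : Finset α // #u = l}) :
    (inclusionMatrix α R i j * inclusionMatrix α R j l) s u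
      = if s.1 ⊆ u.1 then ((l - i).choose (j - i) : R) else 0 := by
  simp only [inclusionMatrix, mul_apply, of_apply, ite_zero_mul_ite_zero, mul_one]
  refine (sum_boole_subtype_card_eq j fun t => s.1 ⊆ t ∧ t ⊆ u.1).trans ?_
  split_ifs with hsu
  · have hfilter : (powersetCard j univ).filter (fun t => s.1 ⊆ t ∧ t ⊆ u.1)
        = (powersetCard j u.1).filter (s.1 ⊆ ·) := by
      ext t
      simp [mem_powersetCard, and_comm, and_assoc]
    rw [hfilter, card_filter_powersetCard_subset s.1 u.1 j hsu (s.2.le.trans hij), s.2, u.2]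
  · rw [filter_false_of_mem fun t _ h => hsu (h.1.trans h.2), card_empty, Nat.cast_zero]

lemma inclusionMatrix_mul_transpose_apply (i j : ℕ) (s s' : {s : Finset α // #s = i}) :
    (inclusionMatrix α R i j * (inclusionMatrix α R i j)ᵀ) s s'
      = #((powersetCard j univ).filter (s.1 ∪ s'.1 ⊆ ·)) := by
  simp only [inclusionMatrix, mul_apply, transpose_apply, of_apply, ite_zero_mul_ite_zero,
    mul_one, ← union_subset_iff]
  exact sum_boole_subtype_card_eq j _

lemma transpose_mul_inclusionMatrix_apply (i j : ℕ) (t t' : {t : Finset α // #t = j}) :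
    ((inclusionMatrix α R i j)ᵀ * inclusionMatrix α R i j) t t' = (#(t.1 ∩ t'.1)).choose i := by
  simp only [inclusionMatrix, mul_apply, transpose_apply, of_apply, ite_zero_mul_ite_zero,
    mul_one, ← subset_inter_iff]
  refine (sum_boole_subtype_card_eq i (· ⊆ t.1 ∩ t'.1)).trans ?_
  rw [← card_powersetCard]
  congr 2
  ext s
  simp [mem_powersetCard, and_comm]

end InclusionMatrix

/-- The entry of `W_{k+2} W_{k+2}ᵀ + W_kᵀ W_k` at two `(k+2)`-sets `S, T` of a `2m`-set, with
`u = #(S ∪ T)` and `a = #(S ∩ T)`. -/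
lemma homotopy_entry {m k u a : ℕ} (hk : Odd (m + k)) (hua : u + a = 2 * (k + 2))
    (hu : u ≤ 2 * m) (ha : a ≤ k + 2) :
    (((if u ≤ k + 4 then (2 * m - u).choose (k + 4 - u) else 0) + a.choose k : ℕ) : ZMod 2)
      = if a = k + 2 then 1 else 0 := by
  obtain rfl | rfl | hak | hak : a = k + 2 ∨ a = k + 1 ∨ a = k ∨ a < k := by omega
  · obtain rfl : u = k + 2 := by omega
    rw [if_pos (by omega), if_pos rfl, ZMod.natCast_eq_one_iff_odd,
      show k + 4 - (k + 2) = 2 by omega,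
      show (k + 2).choose k = (k + 2).choose 2 from Nat.choose_symm_add]
    exact odd_choose_two_add_choose_two hu (by simpa [add_assoc] using hk.add_even even_two)
  · obtain rfl : u = k + 3 := by omega
    rw [if_pos (by omega), if_neg (by omega), ZMod.natCast_eq_zero_iff_even,
      show k + 4 - (k + 3) = 1 by omega, Nat.choose_one_right, Nat.choose_succ_self_right]
    exact ⟨m - 1, by omega⟩
  · obtain rfl : u = k + 4 := by omega
    rw [hak, if_pos le_rfl, if_neg (by omega), Nat.sub_self, Nat.choose_zero_right,
      Nat.choose_self]
    rfl
  · rw [if_neg (by omega), if_neg (by omega), Nat.choose_eq_zero_of_lt hak]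
    rfl

section Exactness

variable {α : Type*} [Fintype α] [DecidableEq α] {m : ℕ}

lemma inclusionMatrix_mul_inclusionMatrix_eq_zero (k : ℕ) :
    inclusionMatrix α (ZMod 2) k (k + 2) * inclusionMatrix α (ZMod 2) (k + 2) (k + 4) = 0 := by
  ext s u
  rw [inclusionMatrix_mul_inclusionMatrix_apply _ (by omega), Matrix.zero_apply,
    show k + 4 - k = 4 by omega, show k + 2 - k = 2 by omega]
  split_ifs <;> decide

lemma inclusionMatrix_homotopy {k : ℕ} (hα : Fintype.card α = 2 * m) (hk : Odd (m + k)) :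
    inclusionMatrix α (ZMod 2) (k + 2) (k + 4) * (inclusionMatrix α (ZMod 2) (k + 2) (k + 4))ᵀ
      + (inclusionMatrix α (ZMod 2) k (k + 2))ᵀ * inclusionMatrix α (ZMod 2) k (k + 2) = 1 := by
  ext S T
  have hST : S = T ↔ #(S.1 ∩ T.1) = k + 2 := by
    refine ⟨by rintro rfl; rw [inter_self, S.2], fun h => Subtype.ext ?_⟩
    have hS : S.1 ∩ T.1 = S.1 := eq_of_subset_of_card_le inter_subset_left (by rw [h, S.2])
    have hT : S.1 ∩ T.1 = T.1 := eq_of_subset_of_card_le inter_subset_right (by rw [h, T.2])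
    rw [← hS, hT]
  rw [Matrix.add_apply, inclusionMatrix_mul_transpose_apply, transpose_mul_inclusionMatrix_apply,
    card_filter_powersetCard_univ_superset, hα, Matrix.one_apply, ← Nat.cast_add]
  simp only [hST]
  refine homotopy_entry hk (by rw [card_union_add_card_inter, S.2, T.2]; ring) ?_ ?_
  · exact (card_le_univ _).trans hα.le
  · exact (card_le_card inter_subset_left).trans S.2.le

lemma ker_inclusionMatrix_eq_range {k : ℕ} (hα : Fintype.card α = 2 * m) (hk : Odd (m + k)) :
    LinearMap.ker (inclusionMatrix α (ZMod 2) k (k + 2)).mulVecLin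
      = LinearMap.range (inclusionMatrix α (ZMod 2) (k + 2) (k + 4)).mulVecLin :=
  LinearMap.ker_eq_range_of_homotopy (inclusionMatrix α (ZMod 2) (k + 2) (k + 4))ᵀ.mulVecLin
    (inclusionMatrix α (ZMod 2) k (k + 2))ᵀ.mulVecLin
    (by rw [← mulVecLin_mul, inclusionMatrix_mul_inclusionMatrix_eq_zero, mulVecLin_zero])
    (by rw [← mulVecLin_mul, ← mulVecLin_mul, ← mulVecLin_add, inclusionMatrix_homotopy hα hk,
      mulVecLin_one])

lemma finrank_ker_inclusionMatrix_add {k : ℕ} (hα : Fintype.card α = 2 * m)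
    (hk : Odd (m + k)) :
    Module.finrank (ZMod 2) (LinearMap.ker (inclusionMatrix α (ZMod 2) k (k + 2)).mulVecLin)
      + Module.finrank (ZMod 2)
          (LinearMap.ker (inclusionMatrix α (ZMod 2) (k + 2) (k + 4)).mulVecLin)
      = (2 * m).choose (k + 4) := by
  rw [ker_inclusionMatrix_eq_range hα hk, LinearMap.finrank_range_add_finrank_ker,
    Module.finrank_fintype_fun_eq_card, Fintype.card_finset_len, hα]

theorem finrank_ker_inclusionMatrix (hα : Fintype.card α = 2 * m) (k : ℕ) (hk : Odd (m + k)) :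
    (Module.finrank (ZMod 2)
        (LinearMap.ker (inclusionMatrix α (ZMod 2) k (k + 2)).mulVecLin) : ℤ)
      = altChooseTail (2 * m) (k + 4) := by
  have hsum := finrank_ker_inclusionMatrix_add hα hk
  rcases lt_or_ge (2 * m) (k + 4) with hlt | hle
  · rw [Nat.choose_eq_zero_of_lt hlt] at hsum
    rw [altChooseTail_eq_zero hlt]
    omega
  · have ih : (Module.finrank (ZMod 2)
        (LinearMap.ker (inclusionMatrix α (ZMod 2) (k + 2) (k + 4)).mulVecLin) : ℤ)
          = altChooseTail (2 * m) (k + 4 + 2) :=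
      finrank_ker_inclusionMatrix hα (k + 2) (by simpa [add_assoc] using hk.add_even even_two)
    have hT := altChooseTail_add_altChooseTail (2 * m) (k + 4)
    omega
termination_by 2 * m - k

end Exactness

lemma linearIndependent_X_none_mul_prod (σ R : Type*) [CommSemiring R] [DecidableEq σ] (k : ℕ) :
    LinearIndependent R fun S : {S : Finset σ // #S = k} =>
      (X none * ∏ j ∈ S.1, X (some j) : MvPolynomial (Option σ) R) := by
  have h : (fun S : {S : Finset σ // #S = k} =>
      (X none * ∏ j ∈ S.1, X (some j) : MvPolynomial (Option σ) R))
        = (fun s => ∏ i ∈ s, X i) ∘ fun S => insertNone S.1 :=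
    funext fun S => (prod_insertNone _ S.1).symm
  rw [h]
  exact (linearIndependent_prod_X _ _).comp _ (insertNone.injective.comp Subtype.val_injective)

lemma pPoly_eq_sum_inclusionMatrix (k : ℕ) (L : {L : Finset (Fin (2 * (k + 1))) // #L = k + 2}) :
    pPoly (k + 1) L.1 = ∑ S : {S : Finset (Fin (2 * (k + 1))) // #S = k},
      inclusionMatrix _ (ZMod 2) k (k + 2) S L • (X none * ∏ j ∈ S.1, X (some j)) := by
  simp only [pPoly, Nat.add_sub_cancel, ← powersetCard_eq_filter, inclusionMatrix, of_apply,
    ite_smul, one_smul, zero_smul]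
  rw [← sum_subtype (powersetCard k univ) (by simp)
    fun S => if S ⊆ L.1 then (X none * ∏ j ∈ S, X (some j) : PolyRing (k + 1)) else 0,
    ← sum_filter]
  congr 1
  ext S
  simp [mem_powersetCard, and_comm]

lemma lcomb_pPoly_eq_comp (k : ℕ) :
    lcomb (fun L : {L : Finset (Fin (2 * (k + 1))) // L.card = k + 1 + 1} => pPoly (k + 1) L.1)
      = Fintype.linearCombination (ZMod 2)
          (fun S : {S : Finset (Fin (2 * (k + 1))) // #S = k} =>
            (X none * ∏ j ∈ S.1, X (some j) : PolyRing (k + 1)))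
        ∘ₗ (inclusionMatrix _ (ZMod 2) k (k + 2)).mulVecLin := by
  refine LinearMap.ext fun ξ => ?_
  simp only [lcomb, LinearMap.coe_mk, AddHom.coe_mk, LinearMap.comp_apply,
    Fintype.linearCombination_apply, mulVecLin_apply, mulVec, dotProduct,
    pPoly_eq_sum_inclusionMatrix, smul_sum, sum_smul, smul_smul]
  rw [sum_comm]
  simp only [mul_comm]

lemma ker_lcomb_pPoly (k : ℕ) :
    LinearMap.ker
        (lcomb fun L : {L : Finset (Fin (2 * (k + 1))) // L.card = k + 1 + 1} =>
          pPoly (k + 1) L.1)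
      = LinearMap.ker (inclusionMatrix (Fin (2 * (k + 1))) (ZMod 2) k (k + 2)).mulVecLin := by
  rw [lcomb_pPoly_eq_comp, LinearMap.ker_comp_of_ker_eq_bot _ (LinearMap.ker_eq_bot.2
    (linearIndependent_X_none_mul_prod _ _ k).fintypeLinearCombination_injective)]

/-- **Lemma 7 (i).** The space `X_{m+1} = {ξ : ∑_L ξ_L p_L = 0}` has dimension `β_n`. -/
theorem statement10 (m : ℕ) (hm : 2 ≤ m) :
    Module.finrank (ZMod 2)
      (LinearMap.ker (lcomb (fun L : {L : Finset (Fin (2*m)) // L.card = m + 1} =>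
        pPoly m L.1)))
      = betaNum m := by
  obtain ⟨k, rfl⟩ : ∃ k, m = k + 1 := ⟨m - 1, by omega⟩
  have hker := finrank_ker_inclusionMatrix (Fintype.card_fin (2 * (k + 1))) k ⟨k, by ring⟩
  have hsum : (Module.finrank (ZMod 2)
      (LinearMap.ker (inclusionMatrix (Fin (2 * (k + 1))) (ZMod 2) k (k + 2)).mulVecLin) : ℤ)
        + alphaNum (k + 1) = Dnum (k + 1) := by
    rw [hker, add_comm, alphaNum_add_altChooseTail]
  rw [ker_lcomb_pPoly, betaNum]
  exact Nat.eq_sub_of_add_eq (by exact_mod_cast hsum)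

end
end

section
/- The ℤ/2-linear map X_{m+1} → (ℤ/2)[R, V_1, …, V_{n-1}] given by ξ ↦ Σ_{i=1}^{D_n} ξ_i·f_i is injective; equivalently, for any ℤ/2-basis Ω of X_{m+1}, the polynomials F_ξ = Σ_{i=1}^{D_n} ξ_i·f_i for ξ ∈ Ω are linearly independent over ℤ/2 in the polynomial ring. -/
open CategoryTheory AlgebraicTopology Finset

noncomputable section

/-!
Comparing coefficients of `R^{m-|S|} ∏_{j∈S} V_j` in `∑ ξ_L f_L` (for `|S| ≤ m-2`) and of
`R ∏_{j∈S} V_j` in `∑ ξ_L p_L` (for `|S| = m-1`) shows that `∑_{L ⊇ S} ξ_L = 0` whenever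
`|S| ≤ m-1`. Summing these relations over all subsets `S` of the complement of a fixed `L₀`,
which has `m-1` elements, counts each `ξ_L` exactly `2^{|L ∖ L₀|}` times, so modulo 2 only
`ξ_{L₀}` survives.
-/

open MvPolynomial

section Exponents

variable {ι : Type*}

def rvExponent (S : Finset ι) (a : ℕ) : Option ι →₀ ℕ :=
  Finsupp.single none a + ∑ j ∈ S, Finsupp.single (some j) 1

@[simp]
lemma rvExponent_apply_none (S : Finset ι) (a : ℕ) : rvExponent S a none = a := by
  simp [rvExponent]

@[simp]
lemma rvExponent_apply_some [DecidableEq ι] (S : Finset ι) (a : ℕ) (j : ι) :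
    rvExponent S a (some j) = if j ∈ S then 1 else 0 := by
  simp [rvExponent, Finsupp.single_apply]

lemma rvExponent_inj {S T : Finset ι} {a b : ℕ} :
    rvExponent S a = rvExponent T b ↔ S = T ∧ a = b := by
  classical
  refine ⟨fun h => ⟨?_, by simpa using congrArg (· none) h⟩, fun ⟨hST, hab⟩ => hST ▸ hab ▸ rfl⟩
  ext j
  have hj := congrArg (· (some j)) h
  simp only [rvExponent_apply_some] at hj
  split_ifs at hj <;> simp_all

lemma X_none_pow_mul_prod_X_some {R : Type*} [CommSemiring R] (S : Finset ι) (a : ℕ) :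
    (X none ^ a * ∏ j ∈ S, X (some j) : MvPolynomial (Option ι) R) =
      monomial (rvExponent S a) 1 := by
  rw [rvExponent, monomial_single_add, monomial_sum_one]
  rfl

lemma coeff_sum_X_none_pow_mul_prod_X_some [DecidableEq ι] {R : Type*} [CommSemiring R]
    (s : Finset (Finset ι)) (g : Finset ι → ℕ) (S : Finset ι) (a : ℕ) :
    coeff (rvExponent S a)
        (∑ T ∈ s, X none ^ g T * ∏ j ∈ T, X (some j) : MvPolynomial (Option ι) R) =
      if S ∈ s ∧ g S = a then 1 else 0 := by
  simp only [X_none_pow_mul_prod_X_some, coeff_sum, coeff_monomial, rvExponent_inj, ite_and,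
    Finset.sum_ite_eq']

end Exponents

lemma coeff_lcomb {ι σ : Type} [Fintype ι] (v : ι → MvPolynomial σ (ZMod 2))
    (ξ : ι → ZMod 2) (e : σ →₀ ℕ) :
    coeff e (lcomb v ξ) = ∑ i, ξ i * coeff e (v i) := by
  simp [lcomb, coeff_sum]

section SupersetSums

variable {α : Type*} [DecidableEq α]

lemma sum_powerset_ite_subset_zmod_two (T L : Finset α) :
    (∑ S ∈ T.powerset, if S ⊆ L then (1 : ZMod 2) else 0) = if Disjoint T L then 1 else 0 := by
  have hfilter : T.powerset.filter (· ⊆ L) = (T ∩ L).powerset := by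
    ext; simp only [Finset.mem_filter, Finset.mem_powerset, Finset.subset_inter_iff]
  rw [← Finset.sum_filter, Finset.sum_const, nsmul_eq_mul, mul_one, hfilter,
    Finset.card_powerset, Nat.cast_pow, ZMod.natCast_self]
  split_ifs with h
  · simp [Finset.disjoint_iff_inter_eq_empty.mp h]
  · exact zero_pow (Finset.not_disjoint_iff_nonempty_inter.mp h).card_ne_zero

lemma eq_zero_of_sum_supersets_eq_zero [Fintype α] {k : ℕ}
    (ξ : {L : Finset α // L.card = k} → ZMod 2)
    (h : ∀ S : Finset α, S.card + k ≤ Fintype.card α → ∑ L with S ⊆ L.1, ξ L = 0) :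
    ξ = 0 := by
  funext L₀
  have hdisj : ∀ L : {L : Finset α // L.card = k}, Disjoint L₀.1ᶜ L.1 ↔ L = L₀ := by
    intro L
    rw [disjoint_compl_left_iff, Subtype.ext_iff]
    exact ⟨fun hs => Finset.eq_of_subset_of_card_le hs (by rw [L.2, L₀.2]), fun h => h ▸ le_rfl⟩
  calc ξ L₀ = ∑ L, ξ L * if Disjoint L₀.1ᶜ L.1 then 1 else 0 := by simp [hdisj]
    _ = ∑ S ∈ L₀.1ᶜ.powerset, ∑ L with S ⊆ L.1, ξ L := by
        simp_rw [← sum_powerset_ite_subset_zmod_two, Finset.mul_sum, Finset.sum_filter]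
        rw [Finset.sum_comm]
        simp [mul_ite]
    _ = 0 := Finset.sum_eq_zero fun S hS => h S ?_
  have hS := Finset.card_le_card (Finset.mem_powerset.mp hS)
  have hk := L₀.2 ▸ Finset.card_le_univ L₀.1
  rw [Finset.card_compl, L₀.2] at hS
  omega

end SupersetSums

section Coefficients

variable {m : ℕ} (ξ : {L : Finset (Fin (2*m)) // L.card = m + 1} → ZMod 2)
  {S : Finset (Fin (2*m))}

lemma coeff_fPoly {L : Finset (Fin (2*m))} (hL : L.card = m + 1)
    (hS : S.card ≤ m - 2) :
    coeff (rvExponent S (m - S.card)) (fPoly m L) = if S ⊆ L then 1 else 0 := by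
  have hexp : m + 1 - S.card - 1 = m - S.card := by omega
  simp [fPoly, coeff_sum_X_none_pow_mul_prod_X_some, hL, hS, hexp]

lemma coeff_pPoly {L : Finset (Fin (2*m))} (hS : S.card = m - 1) :
    coeff (rvExponent S 1) (pPoly m L) = if S ⊆ L then 1 else 0 := by
  simpa [pPoly, hS] using coeff_sum_X_none_pow_mul_prod_X_some (R := ZMod 2)
    (L.powerset.filter (·.card = m - 1)) (fun _ => 1) S 1

lemma coeff_lcomb_fPoly (hS : S.card ≤ m - 2) :
    coeff (rvExponent S (m - S.card)) (lcomb (fun L => fPoly m L.1) ξ) =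
      ∑ L with S ⊆ L.1, ξ L := by
  rw [coeff_lcomb, Finset.sum_filter]
  exact Finset.sum_congr rfl fun L _ => by rw [coeff_fPoly L.2 hS, mul_ite, mul_one, mul_zero]

lemma coeff_lcomb_pPoly (hS : S.card = m - 1) :
    coeff (rvExponent S 1) (lcomb (fun L => pPoly m L.1) ξ) = ∑ L with S ⊆ L.1, ξ L := by
  simp [coeff_lcomb, coeff_pPoly hS, Finset.sum_filter]

end Coefficients

theorem statement11_general (m : ℕ)
    (ξ : {L : Finset (Fin (2*m)) // L.card = m + 1} → ZMod 2)
    (hker : lcomb (fun L : {L : Finset (Fin (2*m)) // L.card = m + 1} =>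
      pPoly m L.1) ξ = 0)
    (hf : lcomb (fun L : {L : Finset (Fin (2*m)) // L.card = m + 1} =>
      fPoly m L.1) ξ = 0) :
    ξ = 0 := by
  refine eq_zero_of_sum_supersets_eq_zero ξ fun S hS => ?_
  rw [Fintype.card_fin] at hS
  rcases (by omega : S.card ≤ m - 2 ∨ S.card = m - 1) with hS | hS
  · rw [← coeff_lcomb_fPoly ξ hS, hf, coeff_zero]
  · rw [← coeff_lcomb_pPoly ξ hS, hker, coeff_zero]

/-- **Lemma 7 (ii).** The `ℤ/2`-linear map `X_{m+1} → (ℤ/2)[R, V_1, …, V_{n-1}]`,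
`ξ ↦ ∑_L ξ_L f_L`, is injective. -/
theorem statement11 (m : ℕ) (hm : 2 ≤ m)
    (ξ : {L : Finset (Fin (2*m)) // L.card = m + 1} → ZMod 2)
    (hker : lcomb (fun L : {L : Finset (Fin (2*m)) // L.card = m + 1} =>
      pPoly m L.1) ξ = 0)
    (hf : lcomb (fun L : {L : Finset (Fin (2*m)) // L.card = m + 1} =>
      fPoly m L.1) ξ = 0) :
    ξ = 0 :=
  statement11_general m ξ hker hf
end
end
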